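/- Let A be a d×d complex matrix whose numerical range W(A) has nonempty interior in ℂ. Then the normalized trace tr(A)/d lies in the interior of W(A). -/

import Mathlib

open Matrix

/-- The numerical range of a `d × d` complex matrix `A`. -/
def numericalRange {d : ℕ} (A : Matrix (Fin d) (Fin d) ℂ) : Set ℂ :=
  {z | ∃ x : Fin d → ℂ, star x ⬝ᵥ x = 1 ∧ star x ⬝ᵥ A.mulVec x = z}

/-!
`W(A)` is convex (Toeplitz–Hausdorff): after an affine change of `A` it suffices to join
`q(x) = 0` to `q(y) = 1`, where `q(v) = v* A v`; rotating `x` by a phase makes `q` real on the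
real segment from `x` to `y`, and the intermediate value theorem applied to the Rayleigh quotient
along that segment hits every `t ∈ [0, 1]`.

If `c = tr(A)/d` were not interior, a real functional `f = Re(w̄ ·)` would satisfy `f ≤ f c` on
`W(A)` and `f < f c` on its interior. The Hermitian part `H` of `w̄ A` has quadratic form
`f ∘ q`, so `f(c) • 1 - H` is positive semidefinite with trace `d f(c) - f(tr A) = 0`, hence
zero. Then `f` is constant on `W(A)`, which contradicts the strict inequality at an interior point.
-/

open ComplexConjugate
open scoped ComplexOrder

theorem Convex.exists_forall_le_of_notMem_interior {E : Type*} [AddCommGroup E] [Module ℝ E]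
    [TopologicalSpace E] [IsTopologicalAddGroup E] [ContinuousSMul ℝ E] {s : Set E} {x : E}
    (hs : Convex ℝ s) (hsint : (interior s).Nonempty) (hx : x ∉ interior s) :
    ∃ f : StrongDual ℝ E, (∀ a ∈ interior s, f a < f x) ∧ ∀ a ∈ s, f a ≤ f x := by
  obtain ⟨f, hf⟩ := geometric_hahn_banach_open_point hs.interior isOpen_interior hx
  refine ⟨f, hf, fun a ha ↦ ?_⟩
  have hcl : s ⊆ closure (interior s) := by
    rw [hs.closure_interior_eq_closure_of_nonempty_interior hsint]
    exact subset_closure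
  exact closure_minimal (fun b hb ↦ (hf b hb).le) (isClosed_Iic.preimage f.continuous) (hcl ha)

section QuadraticForm

variable {n : Type*} [Fintype n]

theorem star_smul_dotProduct_mulVec_smul (M : Matrix n n ℂ) (c : ℂ) (v : n → ℂ) :
    star (c • v) ⬝ᵥ (M *ᵥ (c • v)) = conj c * c * (star v ⬝ᵥ (M *ᵥ v)) := by
  simp only [star_smul, mulVec_smul, smul_dotProduct, dotProduct_smul, smul_eq_mul,
    RCLike.star_def]
  ring

theorem star_smul_dotProduct_smul (c : ℂ) (v : n → ℂ) :
    star (c • v) ⬝ᵥ (c • v) = conj c * c * (star v ⬝ᵥ v) := by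
  simp only [star_smul, smul_dotProduct, dotProduct_smul, smul_eq_mul, RCLike.star_def]
  ring

theorem star_dotProduct_conjTranspose_mulVec (M : Matrix n n ℂ) (v : n → ℂ) :
    star v ⬝ᵥ (Mᴴ *ᵥ v) = conj (star v ⬝ᵥ (M *ᵥ v)) := by
  rw [dotProduct_mulVec, ← star_mulVec, star_dotProduct]
  rfl

theorem star_ofReal_smul_add_dotProduct_mulVec (M : Matrix n n ℂ) (a b : ℝ) (x y : n → ℂ) :
    star ((a : ℂ) • x + (b : ℂ) • y) ⬝ᵥ (M *ᵥ ((a : ℂ) • x + (b : ℂ) • y)) =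
      a ^ 2 * (star x ⬝ᵥ (M *ᵥ x)) +
        a * b * (star x ⬝ᵥ (M *ᵥ y) + star y ⬝ᵥ (M *ᵥ x)) + b ^ 2 * (star y ⬝ᵥ (M *ᵥ y)) := by
  simp only [star_add, star_smul, mulVec_add, mulVec_smul, dotProduct_add, add_dotProduct,
    smul_dotProduct, dotProduct_smul, smul_eq_mul, RCLike.star_def, Complex.conj_ofReal]
  ring

theorem exists_star_dotProduct_self_eq_one_dotProduct_mulVec_eq_div (M : Matrix n n ℂ)
    {v : n → ℂ} (hv : v ≠ 0) :
    ∃ u : n → ℂ, star u ⬝ᵥ u = 1 ∧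
      star u ⬝ᵥ (M *ᵥ u) = star v ⬝ᵥ (M *ᵥ v) / (star v ⬝ᵥ v) := by
  obtain ⟨r, hr, hrv⟩ : ∃ r : ℝ, 0 < r ∧ star v ⬝ᵥ v = r := by
    have hpos := Complex.pos_iff.mp (dotProduct_star_self_pos_iff.mpr hv)
    exact ⟨_, hpos.1, Complex.ext rfl hpos.2.symm⟩
  have hc : conj ((√r)⁻¹ : ℂ) * ((√r)⁻¹ : ℂ) = (r : ℂ)⁻¹ := by
    rw [← Complex.ofReal_inv, Complex.conj_ofReal, ← Complex.ofReal_mul, ← mul_inv,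
      Real.mul_self_sqrt hr.le, Complex.ofReal_inv]
  refine ⟨((√r)⁻¹ : ℂ) • v, ?_, ?_⟩
  · rw [star_smul_dotProduct_smul, hc, hrv, inv_mul_cancel₀ (by exact_mod_cast hr.ne')]
  · rw [star_smul_dotProduct_mulVec_smul, hc, hrv, inv_mul_eq_div]

theorem exists_conj_mul_self_eq_one_cross_im_eq_zero (B : Matrix n n ℂ) (x y : n → ℂ) :
    ∃ γ : ℂ, conj γ * γ = 1 ∧
      (star (γ • x) ⬝ᵥ (B *ᵥ y) + star y ⬝ᵥ (B *ᵥ (γ • x))).im = 0 := by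
  set u := star x ⬝ᵥ (B *ᵥ y) - conj (star y ⬝ᵥ (B *ᵥ x))
  set γ := Complex.exp (u.arg * Complex.I)
  have hγ : conj γ * γ = 1 := by
    rw [Complex.conj_mul', Complex.norm_exp_ofReal_mul_I, Complex.ofReal_one, one_pow]
  -- `conj γ` rotates `u` onto the positive real axis
  have hu : (conj γ * u).im = 0 := by
    rw [← Complex.norm_mul_exp_arg_mul_I u, mul_left_comm, hγ, mul_one, Complex.ofReal_im]
  refine ⟨γ, hγ, ?_⟩
  simp only [star_smul, smul_dotProduct, mulVec_smul, dotProduct_smul, smul_eq_mul,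
    RCLike.star_def] at hu ⊢
  rw [mul_sub, Complex.sub_im, ← map_mul, Complex.conj_im] at hu
  rw [Complex.add_im]
  linarith

theorem exists_dotProduct_mulVec_eq_ofReal_of_mem_Icc (B : Matrix n n ℂ) {x y : n → ℂ}
    (hx : star x ⬝ᵥ x = 1) (hy : star y ⬝ᵥ y = 1) (hBx : star x ⬝ᵥ (B *ᵥ x) = 0)
    (hBy : star y ⬝ᵥ (B *ᵥ y) = 1) {t : ℝ} (ht : t ∈ Set.Icc (0 : ℝ) 1) :
    ∃ v : n → ℂ, star v ⬝ᵥ v = 1 ∧ star v ⬝ᵥ (B *ᵥ v) = t := by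
  obtain ⟨γ, hγ, hcross⟩ := exists_conj_mul_self_eq_one_cross_im_eq_zero B x y
  set x' := γ • x
  have hx' : star x' ⬝ᵥ x' = 1 := by rw [star_smul_dotProduct_smul, hx, mul_one, hγ]
  have hBx' : star x' ⬝ᵥ (B *ᵥ x') = 0 := by
    rw [star_smul_dotProduct_mulVec_smul, hBx, mul_zero]
  set v : ℝ → n → ℂ := fun s ↦ ((1 - s : ℝ) : ℂ) • x' + (s : ℂ) • y
  have hv_ne : ∀ s, v s ≠ 0 := by
    intro s hs
    rcases eq_or_ne s 0 with rfl | h0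
    · simp only [v, sub_zero, Complex.ofReal_one, one_smul, Complex.ofReal_zero, zero_smul,
        add_zero] at hs
      simp [hs] at hx'
    · -- otherwise `y` is a multiple of `x'`, which would force `y* B y = 0`
      have hy' : y = ((-((1 - s) / s) : ℝ) : ℂ) • x' := by
        have := congrArg ((s : ℂ)⁻¹ • ·) (eq_neg_of_add_eq_zero_right hs)
        simp only [smul_smul, inv_mul_cancel₀ (Complex.ofReal_ne_zero.mpr h0), one_smul,
          ← neg_smul] at this
        rw [this]
        push_cast
        ring_nf
      rw [hy', star_smul_dotProduct_mulVec_smul, hBx', mul_zero] at hBy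
      exact zero_ne_one hBy
  have hv_real : ∀ s, (star (v s) ⬝ᵥ (B *ᵥ v s)).im = 0 := by
    intro s
    simp only [v]
    rw [star_ofReal_smul_add_dotProduct_mulVec, hBx', hBy]
    simp [hcross, ← Complex.ofReal_pow]
  set F : ℝ → ℝ := fun s ↦ (star (v s) ⬝ᵥ (B *ᵥ v s) / (star (v s) ⬝ᵥ v s)).re
  have hF : Continuous F := by
    have hv : Continuous v := by fun_prop
    refine Complex.continuous_re.comp (Continuous.div ?_ ?_ ?_)
    · exact (continuous_star.comp hv).dotProduct (continuous_const.matrix_mulVec hv)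
    · exact (continuous_star.comp hv).dotProduct hv
    · exact fun s ↦ dotProduct_star_self_eq_zero.not.mpr (hv_ne s)
  obtain ⟨s, -, hs⟩ := intermediate_value_Icc zero_le_one hF.continuousOn
    (by simpa [F, v, hx', hBx', hy, hBy] using ht)
  obtain ⟨u, hu, hBu⟩ := exists_star_dotProduct_self_eq_one_dotProduct_mulVec_eq_div B (hv_ne s)
  refine ⟨u, hu, Complex.ext ?_ ?_⟩
  · rw [hBu]; exact hs
  · have hnorm_real : (star (v s) ⬝ᵥ v s).im = 0 :=
      (Complex.nonneg_iff.mp (dotProduct_star_self_nonneg (v s))).2.symm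
    rw [hBu, Complex.div_im, hv_real s, hnorm_real]
    simp

theorem exists_isHermitian_trace_eq_dotProduct_mulVec_eq (A : Matrix n n ℂ)
    (f : StrongDual ℝ ℂ) :
    ∃ H : Matrix n n ℂ, H.IsHermitian ∧ H.trace = f A.trace ∧
      ∀ x, star x ⬝ᵥ (H *ᵥ x) = f (star x ⬝ᵥ (A *ᵥ x)) := by
  set w := (InnerProductSpace.toDual ℝ ℂ).symm f
  have hf : ∀ z, (f z : ℂ) = 2⁻¹ * (conj w * z + w * conj z) := by
    intro z
    rw [← InnerProductSpace.toDual_symm_apply (x := z), Complex.inner, mul_comm z,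
      ← Complex.conj_conj w, ← map_mul, Complex.conj_conj, Complex.add_conj]
    push_cast
    ring
  refine ⟨(2⁻¹ : ℂ) • (conj w • A + w • Aᴴ), ?_, ?_, fun x ↦ ?_⟩
  · simp [IsHermitian, conjTranspose_add, conjTranspose_smul, add_comm]
  · simp [trace_smul, trace_add, trace_conjTranspose, hf, mul_add]
  · simp [add_mulVec, smul_mulVec, star_dotProduct_conjTranspose_mulVec, hf, mul_add]

end QuadraticForm

theorem convex_numericalRange {d : ℕ} (A : Matrix (Fin d) (Fin d) ℂ) :
    Convex ℝ (numericalRange A) := by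
  rintro _ ⟨x, hx, rfl⟩ _ ⟨y, hy, rfl⟩ a b ha hb hab
  set z₁ := star x ⬝ᵥ (A *ᵥ x)
  set z₂ := star y ⬝ᵥ (A *ᵥ y)
  rcases eq_or_ne z₁ z₂ with h | h
  · exact ⟨x, hx, by rw [← h, ← add_smul, hab, one_smul]⟩
  have hne : z₂ - z₁ ≠ 0 := sub_ne_zero.mpr h.symm
  -- an affine change of `A` moves `z₁, z₂` to `0, 1`
  set B := (z₂ - z₁)⁻¹ • (A - z₁ • 1)
  have hB : ∀ v, star v ⬝ᵥ v = 1 →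
      star v ⬝ᵥ (B *ᵥ v) = (z₂ - z₁)⁻¹ * (star v ⬝ᵥ (A *ᵥ v) - z₁) := by
    intro v hv
    simp [B, sub_mulVec, smul_mulVec, hv]
  obtain ⟨v, hv, hBv⟩ := exists_dotProduct_mulVec_eq_ofReal_of_mem_Icc B hx hy
    (by rw [hB x hx, sub_self, mul_zero]) (by rw [hB y hy, inv_mul_cancel₀ hne])
    ⟨hb, by linarith⟩
  refine ⟨v, hv, ?_⟩
  have hq : star v ⬝ᵥ (A *ᵥ v) = z₁ + b * (z₂ - z₁) := by
    rw [← hBv, hB v hv]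
    field_simp
    ring
  have hab' : (a : ℂ) + b = 1 := by exact_mod_cast hab
  rw [Complex.real_smul, Complex.real_smul]
  linear_combination hq - z₁ * hab'

theorem apply_eq_of_forall_le_apply_trace_div {d : ℕ} (A : Matrix (Fin d) (Fin d) ℂ)
    (f : StrongDual ℝ ℂ) (hf : ∀ z ∈ numericalRange A, f z ≤ f (A.trace / d)) :
    ∀ z ∈ numericalRange A, f z = f (A.trace / d) := by
  obtain ⟨H, hH, hH_trace, hHq⟩ := exists_isHermitian_trace_eq_dotProduct_mulVec_eq A f
  set μ := f (A.trace / d)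
  set N : Matrix (Fin d) (Fin d) ℂ := (μ : ℂ) • 1 - H
  have hN_unit : ∀ u, star u ⬝ᵥ u = 1 →
      star u ⬝ᵥ (N *ᵥ u) = ((μ - f (star u ⬝ᵥ (A *ᵥ u)) : ℝ) : ℂ) := by
    intro u hu
    simp [N, sub_mulVec, smul_mulVec, hu, hHq]
  have hN_psd : N.PosSemidef := by
    refine PosSemidef.of_dotProduct_mulVec_nonneg ?_ fun x ↦ ?_
    · simp [N, IsHermitian, conjTranspose_sub, conjTranspose_smul, hH.eq]
    rcases eq_or_ne x 0 with rfl | hx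
    · simp
    obtain ⟨u, hu, hNu⟩ := exists_star_dotProduct_self_eq_one_dotProduct_mulVec_eq_div N hx
    rw [eq_div_iff (dotProduct_star_self_eq_zero.not.mpr hx), hN_unit u hu] at hNu
    rw [← hNu]
    exact mul_nonneg (Complex.zero_le_real.mpr (sub_nonneg.mpr (hf _ ⟨u, hu, rfl⟩)))
      (dotProduct_star_self_nonneg x)
  have hN_trace : N.trace = 0 := by
    have hA : A.trace = (d : ℝ) • (A.trace / d) := by
      rcases eq_or_ne d 0 with rfl | hd
      · simp
      · rw [Complex.real_smul, Complex.ofReal_natCast, mul_div_cancel₀ _ (by exact_mod_cast hd)]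
    rw [trace_sub, trace_smul, trace_one, hH_trace, hA, map_smul]
    simp [μ, mul_comm]
  have hN : N = 0 := hN_psd.trace_eq_zero_iff.mp hN_trace
  rintro _ ⟨u, hu, rfl⟩
  have h0 := hN_unit u hu
  rw [hN, zero_mulVec, dotProduct_zero, eq_comm, Complex.ofReal_eq_zero, sub_eq_zero] at h0
  exact h0.symm

/-- If `W(A)` has nonempty interior, then the normalized trace `tr(A)/d` lies in the
interior of `W(A)`. -/
theorem normalized_trace_mem_interior_numericalRange {d : ℕ}
    (A : Matrix (Fin d) (Fin d) ℂ)
    (h : (interior (numericalRange A)).Nonempty) :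
    A.trace / (d : ℂ) ∈ interior (numericalRange A) := by
  obtain ⟨z₀, hz₀⟩ := h
  by_contra hc
  obtain ⟨f, hf_interior, hf⟩ :=
    (convex_numericalRange A).exists_forall_le_of_notMem_interior ⟨z₀, hz₀⟩ hc
  exact (hf_interior z₀ hz₀).ne
    (apply_eq_of_forall_le_apply_trace_div A f hf z₀ (interior_subset hz₀))
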